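/- Let A be a C*-algebra and a, b ∈ A positive elements with ‖a - b‖ < ε for some ε > 0. Then (a - ε)₊ is Cuntz subequivalent to b, i.e. there exist sequences (xₙ), (yₙ) in A with xₙ b yₙ → (a - ε)₊ in norm. -/

import Mathlib

open Filter

private lemma tri16 {A : Type*} [CStarAlgebra A] (y : A) (p q : ℝ → ℝ)
    (hp : ContinuousOn p (spectrum ℝ y)) (hq : ContinuousOn q (spectrum ℝ y)) :
    cfc p y * cfc q y * cfc p y = cfc (fun t => p t * q t * p t) y := by
  have e1 : cfc (fun t => p t * q t) y = cfc p y * cfc q y := cfc_mul p q y hp hq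
  have e2 : cfc (fun t => (p t * q t) * p t) y
      = cfc (fun t => p t * q t) y * cfc p y := cfc_mul _ p y (hp.mul hq) hp
  rw [e1] at e2
  exact e2.symm

/-- If `a, b` are positive elements of a C*-algebra with `‖a - b‖ < ε`, then
`(a - ε)₊` is Cuntz subequivalent to `b`: there are sequences `(xₙ), (yₙ)` with
`xₙ b yₙ → (a - ε)₊`. -/
theorem stmt16 {A : Type*} [CStarAlgebra A] [PartialOrder A] [StarOrderedRing A] (a b : A) (ha : 0 ≤ a) (hb : 0 ≤ b)
    (ε : ℝ) (hε : 0 < ε) (h : ‖a - b‖ < ε) :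
    ∃ x y : ℕ → A, Filter.Tendsto (fun n => x n * b * y n) Filter.atTop
      (nhds (cfc (fun t : ℝ => max (t - ε) 0) a)) := by
  set δ := ‖a - b‖ with hδdef
  have hδ0 : 0 ≤ δ := norm_nonneg _
  have hεδ : 0 < ε - δ := by linarith
  set f : ℝ → ℝ := fun t => max (t - ε) 0 with hf
  set sf : ℝ → ℝ := fun t => Real.sqrt (max (t - ε) 0) with hsf
  set g : ℝ → ℝ := fun t => Real.sqrt (max (t - ε) 0 / max (t - δ) (ε - δ)) with hg
  have hfc : Continuous f := by fun_prop
  have hden : ∀ t : ℝ, max (t - δ) (ε - δ) ≠ 0 :=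
    fun t => ne_of_gt (lt_of_lt_of_le hεδ (le_max_right _ _))
  have hgc : Continuous g :=
    Real.continuous_sqrt.comp (hfc.div (by fun_prop) hden)
  have hsfc : Continuous sf := Real.continuous_sqrt.comp hfc
  set e := cfc f a with he_def
  set s := cfc sf a with hs_def
  set z := cfc g a with hz_def
  have hse : IsSelfAdjoint e := cfc_predicate f a
  have hss : IsSelfAdjoint s := cfc_predicate sf a
  have hsz : IsSelfAdjoint z := cfc_predicate g a
  have he0 : 0 ≤ e := cfc_nonneg fun t _ => le_max_right _ _
  -- s * s = e
  have hsse : s * s = e := by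
    rw [hs_def, ← cfc_mul sf sf a hsfc.continuousOn hsfc.continuousOn]
    exact cfc_congr fun t _ => Real.mul_self_sqrt (le_max_right _ _)
  -- z * (a - δ) * z = e
  have hsub : cfc (fun t : ℝ => t - δ) a = a - algebraMap ℝ A δ := by
    rw [cfc_sub (fun t : ℝ => t) (fun _ : ℝ => δ) a (by fun_prop) (by fun_prop),
      cfc_id' ℝ a, cfc_const δ a]
  have key1 : z * (a - algebraMap ℝ A δ) * z = e := by
    rw [← hsub, hz_def, tri16 a g (fun t : ℝ => t - δ) hgc.continuousOn (by fun_prop)]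
    apply cfc_congr
    intro t _
    show Real.sqrt (max (t - ε) 0 / max (t - δ) (ε - δ)) * (t - δ) *
      Real.sqrt (max (t - ε) 0 / max (t - δ) (ε - δ)) = max (t - ε) 0
    rcases le_or_gt ε t with ht | ht
    · have h1 : max (t - ε) 0 = t - ε := max_eq_left (by linarith)
      have h2 : max (t - δ) (ε - δ) = t - δ := max_eq_left (by linarith)
      have h3 : (0:ℝ) < t - δ := by linarith
      rw [h1, h2, mul_comm (Real.sqrt _) (t - δ), mul_assoc,
        Real.mul_self_sqrt (div_nonneg (by linarith) h3.le)]
      field_simp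
    · have h1 : max (t - ε) 0 = 0 := max_eq_right (by linarith)
      rw [h1]
      simp
  -- e ≤ z * b * z
  have h1' : a - b ≤ algebraMap ℝ A δ :=
    IsSelfAdjoint.le_algebraMap_norm_self
      ((IsSelfAdjoint.of_nonneg ha).sub (IsSelfAdjoint.of_nonneg hb))
  have h1 : a - algebraMap ℝ A δ ≤ b := sub_le_comm.mp h1'
  set y := z * b * z with hy_def
  have hey : e ≤ y := by
    calc e = z * (a - algebraMap ℝ A δ) * z := key1.symm
    _ ≤ z * b * z := by simpa [hsz.star_eq] using star_left_conjugate_le_conjugate h1 z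
  have hy0 : 0 ≤ y := by simpa [hsz.star_eq] using star_left_conjugate_nonneg hb z
  have hsy : IsSelfAdjoint y := .of_nonneg hy0
  have hσy : ∀ t ∈ spectrum ℝ y, (0:ℝ) ≤ t := fun t ht => spectrum_nonneg_of_nonneg hy0 ht
  -- the sequences
  set c : ℕ → ℝ := fun n => 1 / ((n : ℝ) + 1) with hc_def
  have hc0 : ∀ n, 0 < c n := fun n => by positivity
  set vf : ℕ → ℝ → ℝ := fun n t => (Real.sqrt (t + c n))⁻¹ with hvf
  have hvfc : ∀ n, ContinuousOn (vf n) (spectrum ℝ y) := by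
    intro n
    apply ContinuousOn.inv₀ (by fun_prop)
    intro t ht
    exact ne_of_gt (Real.sqrt_pos.mpr (by have := hσy t ht; have := hc0 n; linarith))
  set v : ℕ → A := fun n => cfc (vf n) y with hv
  refine ⟨fun n => s * v n * z, fun n => z * v n * s, ?_⟩
  rw [tendsto_iff_norm_sub_tendsto_zero]
  apply squeeze_zero (fun n => norm_nonneg _) ?_ tendsto_one_div_add_atTop_nhds_zero_nat
  intro n
  -- rewrite the product
  have hprod : s * v n * z * b * (z * v n * s) = s * (v n * y * v n) * s := by
    simp only [hy_def, mul_assoc]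
  -- v n * y * v n = cfc k y
  have hvyv : v n * y * v n = cfc (fun t => vf n t * t * vf n t) y := by
    have := tri16 y (vf n) (fun t : ℝ => t) (hvfc n) (by fun_prop)
    rw [cfc_id' ℝ y hsy] at this
    exact this.trans (cfc_congr fun t _ => rfl)
  -- error term
  set u : A := cfc (fun t => Real.sqrt (c n / (t + c n))) y with hu
  have hucont : ContinuousOn (fun t : ℝ => c n / (t + c n)) (spectrum ℝ y) := by
    apply ContinuousOn.div (by fun_prop) (by fun_prop)
    intro t ht
    have := hσy t ht; have := hc0 n; positivity
  have husa : IsSelfAdjoint u := cfc_predicate _ y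
  have hsqcont : ContinuousOn (fun t : ℝ => Real.sqrt (c n / (t + c n))) (spectrum ℝ y) :=
    Real.continuous_sqrt.comp_continuousOn hucont
  have huu : u * u = cfc (fun t => c n / (t + c n)) y := by
    rw [hu, ← cfc_mul _ _ y hsqcont hsqcont]
    apply cfc_congr
    intro t ht
    have ht0 := hσy t ht
    have := hc0 n
    exact Real.mul_self_sqrt (by positivity)
  have herr : e - s * (v n * y * v n) * s = s * (u * u) * s := by
    rw [hvyv, huu]
    have h1e : (1 : A) - cfc (fun t => vf n t * t * vf n t) y
        = cfc (fun t : ℝ => c n / (t + c n)) y := by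
      rw [← cfc_one ℝ y hsy, ← cfc_sub (1 : ℝ → ℝ) (fun t => vf n t * t * vf n t) y (by fun_prop)
        (((hvfc n).mul (by fun_prop)).mul (hvfc n))]
      apply cfc_congr
      intro t ht
      have ht0 := hσy t ht
      have hcn := hc0 n
      show 1 - (Real.sqrt (t + c n))⁻¹ * t * (Real.sqrt (t + c n))⁻¹ = c n / (t + c n)
      have hs2 : Real.sqrt (t + c n) * Real.sqrt (t + c n) = t + c n :=
        Real.mul_self_sqrt (by linarith)
      have hsne : Real.sqrt (t + c n) ≠ 0 :=
        ne_of_gt (Real.sqrt_pos.mpr (by linarith))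
      field_simp
      rw [sq, hs2]; ring

    rw [← h1e]
    have : e = s * 1 * s := by rw [mul_one, hsse]
    rw [this]
    noncomm_ring
  -- norm bound
  have hnorm : ‖e - s * (v n * y * v n) * s‖ ≤ c n := by
    rw [herr]
    have hw : s * (u * u) * s = star (u * s) * (u * s) := by
      rw [star_mul, husa.star_eq, hss.star_eq]
      simp [mul_assoc]
    rw [hw, CStarRing.norm_star_mul_self]
    have hw2 : ‖u * s‖ * ‖u * s‖ = ‖u * e * u‖ := by
      rw [← CStarRing.norm_self_mul_star (x := u * s)]
      congr 1
      rw [star_mul, husa.star_eq, hss.star_eq, ← hsse]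
      simp [mul_assoc]
    rw [hw2]
    have hueu_le : u * e * u ≤ u * y * u := by
      simpa [husa.star_eq] using star_left_conjugate_le_conjugate hey u
    have hueu0 : 0 ≤ u * e * u := by
      simpa [husa.star_eq] using star_left_conjugate_nonneg he0 u
    refine le_trans (CStarAlgebra.norm_le_norm_of_nonneg_of_le hueu0 hueu_le) ?_
    have huyu : u * y * u = cfc (fun t => Real.sqrt (c n / (t + c n)) * t *
        Real.sqrt (c n / (t + c n))) y := by
      have := tri16 y (fun t => Real.sqrt (c n / (t + c n))) (fun t : ℝ => t)
        hsqcont (by fun_prop)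
      rw [cfc_id' ℝ y hsy] at this
      exact this.trans (cfc_congr fun t _ => rfl)
    rw [huyu]
    apply norm_cfc_le (hc0 n).le
    intro t ht
    have ht0 := hσy t ht
    have hcn := hc0 n
    have hval : Real.sqrt (c n / (t + c n)) * t * Real.sqrt (c n / (t + c n))
        = t * (c n / (t + c n)) := by
      rw [mul_comm _ t, mul_assoc, Real.mul_self_sqrt (by positivity)]
    rw [Real.norm_eq_abs, hval, abs_of_nonneg (by positivity)]
    have hre : t * (c n / (t + c n)) = c n * t / (t + c n) := by ring
    rw [hre, div_le_iff₀ (by linarith)]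
    exact mul_le_mul_of_nonneg_left (by linarith) hcn.le
  calc ‖s * v n * z * b * (z * v n * s) - e‖ = ‖e - s * (v n * y * v n) * s‖ := by
        rw [hprod, norm_sub_rev]
  _ ≤ c n := hnorm
  _ = 1 / ((n : ℝ) + 1) := rfl
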